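/- Under the projection ρ, the action of T corresponds to the fractional-linear map (a,b) ↦ ((2a+b−2)/(2a+2b−3), (a+2b−2)/(2a+2b−3)): for every (x,y,z) ∈ ℝ³ with x − y + z ≠ 0 and −7x − y + z ≠ 0, writing (a,b) = ρ(x,y,z), one has φ(T·(x,y,z)) = −7x − y + z ≠ 0, 2a + 2b − 3 ≠ 0, and ρ(T·(x,y,z)) = ((2a+b−2)/(2a+2b−3), (a+2b−2)/(2a+2b−3)). -/

import Mathlib

open Matrix

/-- The matrix `T`. -/
def T : Matrix (Fin 3) (Fin 3) ℝ := !![-1,0,0; 2,1,0; -4,0,1]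

/-- The linear functional `φ(x,y,z) = x − y + z`. -/
def phi (p : Fin 3 → ℝ) : ℝ := p 0 - p 1 + p 2

/-- The projection `ρ(x,y,z) = (−2(x−z)/(x−y+z), −2y/(x−y+z))`. -/
noncomputable def rho (p : Fin 3 → ℝ) : ℝ × ℝ :=
  (-2 * (p 0 - p 2) / phi p, -2 * p 1 / phi p)

/-- Under the projection `ρ`, the action of `T` is the fractional-linear map
`(a,b) ↦ ((2a+b−2)/(2a+2b−3), (a+2b−2)/(2a+2b−3))`. -/
theorem rho_T (x y z : ℝ) (h : x - y + z ≠ 0) (h' : -7 * x - y + z ≠ 0) :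
    phi (T.mulVec ![x, y, z]) = -7 * x - y + z ∧
    phi (T.mulVec ![x, y, z]) ≠ 0 ∧
    (2 * (rho ![x, y, z]).1 + 2 * (rho ![x, y, z]).2 - 3 ≠ 0) ∧
    rho (T.mulVec ![x, y, z]) =
      ((2 * (rho ![x, y, z]).1 + (rho ![x, y, z]).2 - 2) /
        (2 * (rho ![x, y, z]).1 + 2 * (rho ![x, y, z]).2 - 3),
       ((rho ![x, y, z]).1 + 2 * (rho ![x, y, z]).2 - 2) /
        (2 * (rho ![x, y, z]).1 + 2 * (rho ![x, y, z]).2 - 3)) := by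
  have hphi : phi ![x, y, z] = x - y + z := by
    simp [phi]
  have hTv : T.mulVec ![x, y, z] = ![-x, 2 * x + y, -4 * x + z] := by
    funext i
    fin_cases i <;> simp [T, mulVec, dotProduct, Fin.sum_univ_three]
  have h1 : phi (T.mulVec ![x, y, z]) = -7 * x - y + z := by
    rw [hTv]; simp [phi]; ring
  have hden : 2 * (rho ![x, y, z]).1 + 2 * (rho ![x, y, z]).2 - 3
      = (-7 * x - y + z) / (x - y + z) := by
    simp only [rho, hphi, Matrix.cons_val_zero, Matrix.cons_val_one, Matrix.head_cons, Matrix.cons_val_two, Matrix.tail_cons]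
    field_simp
    ring
  refine ⟨h1, h1 ▸ h', ?_, ?_⟩
  · rw [hden]
    exact div_ne_zero h' h
  · rw [hTv, hden]
    have e1 : 2 * (rho ![x, y, z]).1 + (rho ![x, y, z]).2 - 2
        = (-6 * x + 2 * z) / (x - y + z) := by
      simp only [rho, hphi, Matrix.cons_val_zero, Matrix.cons_val_one, Matrix.head_cons, Matrix.cons_val_two, Matrix.tail_cons]; field_simp; ring
    have e2 : (rho ![x, y, z]).1 + 2 * (rho ![x, y, z]).2 - 2
        = (-4 * x - 2 * y) / (x - y + z) := by
      simp only [rho, hphi, Matrix.cons_val_zero, Matrix.cons_val_one, Matrix.head_cons, Matrix.cons_val_two, Matrix.tail_cons]; field_simp; ring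
    rw [e1, e2, div_div_div_cancel_right₀ h, div_div_div_cancel_right₀ h]
    have hd : phi ![-x, 2 * x + y, -4 * x + z] = -7 * x - y + z := by
      simp [phi]; ring
    simp only [rho, hd, Matrix.cons_val_zero, Matrix.cons_val_one, Matrix.head_cons,
      Matrix.cons_val_two, Matrix.tail_cons]
    refine Prod.ext ?_ ?_ <;> · dsimp only; congr 1; ring
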